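/- arXiv:2302.08924 — 2 statements merged into one kernel-verified Lean document; each statement's English description precedes it below -/
import Mathlib

section
/- Abstract non-deficit inequality for MUDAR (Lemma 4, ND): let m ≥ 1 and K be natural numbers, let v : Fin K → ℝ be injective with the property that for every k < K at most m − 1 indices j < k satisfy v(j) > v(k), and let p̂ : Fin K → ℝ satisfy p̂(k) ≥ 0 for every k < m and p̂(k) ≥ ψ(k) for every k with m ≤ k < K. Let W_A be the complement of W_R in Fin K. Then Σ_{k ∈ W_A} p̂(k) + Σ_{k ∈ W_R} (p̂(k) − v(k)) ≥ 0. -/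
open scoped Classical

/-- For a finite set `s` of reals with at least `r` elements, the `r`-th largest element
of `s` (1-based): the entry at position `r − 1` of `s` sorted in decreasing order. -/
noncomputable def kthLargest (s : Finset ℝ) (r : ℕ) : ℝ :=
  (s.sort (· ≤ ·)).reverse.getD (r - 1) 0

/-- `ψ k`: the `(m+1)`-st largest element of the prefix `{v 0, v 1, …, v k}`. -/
noncomputable def psi {K : ℕ} (m : ℕ) (v : Fin K → ℝ) (k : ℕ) : ℝ :=
  kthLargest ((Finset.univ.filter (fun j : Fin K => (j : ℕ) ≤ k)).image v) (m + 1)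

/-- `W_R`: the indices `k` such that `v k` is not among the `m` largest of all `K` values,
i.e. at least `m` indices `j` satisfy `v j > v k`. -/
noncomputable def WR {K : ℕ} (m : ℕ) (v : Fin K → ℝ) : Finset (Fin K) :=
  Finset.univ.filter (fun k => m ≤ (Finset.univ.filter (fun j : Fin K => v k < v j)).card)

/-! For `k ≥ m` the prefix condition puts `v k` among the `m` largest of `v 0, …, v k`, so `ψ k`
is the value that step `k` pushes out of the top `m`. A value is never pushed out twice, hence
`ψ` is injective on `{k | m ≤ k}`; every `ψ k` lies in `v '' W_R`, and `W_R` misses the `m` largest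
values, so it has at most `K - m` elements. Thus `k ↦ ψ k` is a bijection onto `v '' W_R` and the
revenue equals `∑_{k < m} p̂ k + ∑_{k ≥ m} (p̂ k - ψ k) ≥ 0`. -/

open Finset Function

theorem Fin.card_filter_val_le {n : ℕ} (t : ℕ) : #{i : Fin n | (i : ℕ) ≤ t} = min n (t + 1) := by
  simp_rw [← Nat.lt_succ_iff]
  exact Fin.card_filter_val_lt

theorem Fin.card_filter_le_val {n : ℕ} (m : ℕ) : #{i : Fin n | m ≤ (i : ℕ)} = n - m := by
  have hsplit := card_filter_add_card_filter_not (s := (univ : Finset (Fin n)))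
    (fun i : Fin n => m ≤ (i : ℕ))
  simp_rw [not_le, Fin.card_filter_val_lt, card_univ, Fintype.card_fin] at hsplit
  omega

theorem card_filter_image_of_injective {α β : Type*} [DecidableEq β] {f : α → β}
    (hf : Injective f) (s : Finset α) (p : β → Prop) [DecidablePred p] :
    #{y ∈ s.image f | p y} = #{a ∈ s | p (f a)} := by
  rw [filter_image, card_image_of_injective _ hf]

theorem kthLargest_eq_orderEmbOfFin {s : Finset ℝ} {r : ℕ} (hr : 1 ≤ r) (hrs : r ≤ #s) :
    kthLargest s r = s.orderEmbOfFin rfl ⟨#s - r, by omega⟩ := by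
  rw [kthLargest, orderEmbOfFin_apply, List.getD_eq_getElem _ _ (by simp; omega),
    List.getElem_reverse]
  simp only [length_sort]
  congr 1
  dsimp only
  omega

theorem kthLargest_mem {s : Finset ℝ} {r : ℕ} (hr : 1 ≤ r) (hrs : r ≤ #s) :
    kthLargest s r ∈ s := by
  rw [kthLargest_eq_orderEmbOfFin hr hrs]
  exact orderEmbOfFin_mem s rfl _

theorem card_filter_kthLargest_lt {s : Finset ℝ} {r : ℕ} (hr : 1 ≤ r) (hrs : r ≤ #s) :
    #{y ∈ s | kthLargest s r < y} = r - 1 := by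
  set e := s.orderEmbOfFin rfl
  have hfilter : {y ∈ s | kthLargest s r < y} = (Ioi ⟨#s - r, by omega⟩).map e.toEmbedding := by
    ext y
    have hrange : y ∈ s ↔ ∃ i, e i = y := by
      rw [← Finset.mem_coe, ← range_orderEmbOfFin s rfl, Set.mem_range]
    simp only [kthLargest_eq_orderEmbOfFin hr hrs, mem_filter, mem_map, mem_Ioi, hrange]
    constructor
    · rintro ⟨⟨i, rfl⟩, h⟩
      exact ⟨i, e.lt_iff_lt.mp h, rfl⟩
    · rintro ⟨i, h, rfl⟩
      exact ⟨⟨i, rfl⟩, e.lt_iff_lt.mpr h⟩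
  rw [hfilter, card_map, Fin.card_Ioi]
  dsimp only
  omega

theorem card_filter_kthLargest_le {s : Finset ℝ} {r : ℕ} (hr : 1 ≤ r) (hrs : r ≤ #s) :
    #{y ∈ s | kthLargest s r ≤ y} = r := by
  have hinsert :
      {y ∈ s | kthLargest s r ≤ y} = insert (kthLargest s r) {y ∈ s | kthLargest s r < y} := by
    ext y
    simp only [mem_filter, mem_insert, le_iff_lt_or_eq]
    constructor
    · rintro ⟨hy, h | rfl⟩
      · exact Or.inr ⟨hy, h⟩
      · exact Or.inl rfl
    · rintro (rfl | ⟨hy, h⟩)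
      · exact ⟨kthLargest_mem hr hrs, Or.inr rfl⟩
      · exact ⟨hy, Or.inl h⟩
  rw [hinsert, card_insert_of_notMem (by simp), card_filter_kthLargest_lt hr hrs]
  omega

section Mudar

variable {K m : ℕ} {v : Fin K → ℝ}

theorem psi_spec (hv : Injective v) {t : ℕ} (hmt : m ≤ t) (htK : t < K) :
    ∃ j : Fin K, (j : ℕ) ≤ t ∧ psi m v t = v j ∧
      #{i : Fin K | (i : ℕ) ≤ t ∧ v j < v i} = m := by
  set P : Finset (Fin K) := {i | (i : ℕ) ≤ t}
  have hcard : #(P.image v) = t + 1 := by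
    rw [card_image_of_injective _ hv, Fin.card_filter_val_le]
    omega
  obtain ⟨j, hjP, hj⟩ :=
    mem_image.mp (kthLargest_mem (s := P.image v) (r := m + 1) (by omega) (by omega))
  have habove := card_filter_kthLargest_lt (s := P.image v) (r := m + 1) (by omega) (by omega)
  rw [← hj, card_filter_image_of_injective hv, filter_filter] at habove
  exact ⟨j, (mem_filter.mp hjP).2, hj.symm, habove⟩

theorem psi_mem_image_WR (hv : Injective v) {t : ℕ} (hmt : m ≤ t) (htK : t < K) :
    psi m v t ∈ (WR m v).image v := by
  obtain ⟨j, -, hj, habove⟩ := psi_spec hv hmt htK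
  refine hj ▸ mem_image_of_mem v (mem_filter.mpr ⟨mem_univ j, habove ▸ card_le_card ?_⟩)
  exact monotone_filter_right _ fun i _ hi => hi.2

theorem card_WR_le (hv : Injective v) : #(WR m v) ≤ K - m := by
  suffices min m K ≤ #(WR m v)ᶜ by
    have hWR : #(WR m v) ≤ K := by simpa using card_le_univ (WR m v)
    rw [card_compl, Fintype.card_fin] at this
    omega
  set r := min m K
  rcases Nat.eq_zero_or_pos r with hr | hr
  · omega
  set s := univ.image v
  have hs : #s = K := by rw [card_image_of_injective _ hv, card_univ, Fintype.card_fin]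
  set x := kthLargest s r
  have htop : #{k : Fin K | x ≤ v k} = r := by
    rw [← card_filter_kthLargest_le (s := s) hr (by omega), card_filter_image_of_injective hv]
  rw [← htop]
  refine card_le_card fun k hk => mem_compl.mpr fun hkWR => ?_
  have hstrict : #{j : Fin K | x < v j} = r - 1 := by
    rw [← card_filter_kthLargest_lt (s := s) hr (by omega), card_filter_image_of_injective hv]
  have hmono : #{j : Fin K | v k < v j} ≤ #{j : Fin K | x < v j} :=
    card_le_card (monotone_filter_right _ fun j _ hj => (mem_filter.mp hk).2.trans_lt hj)
  have := (mem_filter.mp hkWR).2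
  omega

theorem lt_of_le_card_filter
    (hpre : ∀ k : Fin K, #{j : Fin K | (j : ℕ) < k ∧ v k < v j} ≤ m - 1) (hv : Injective v)
    {j k : Fin K} (hjk : j < k)
    (habove : m ≤ #{i : Fin K | (i : ℕ) ≤ k ∧ v j < v i}) : v j < v k := by
  -- Otherwise the `m` indices above `v j` and `j` itself all lie above `v k` before `k`.
  by_contra! hkj
  have hkj : v k < v j := hkj.lt_of_ne (hv.ne hjk.ne')
  have hsub : insert j ({i : Fin K | (i : ℕ) ≤ k ∧ v j < v i} : Finset (Fin K)) ⊆
      ({i : Fin K | (i : ℕ) < k ∧ v k < v i} : Finset (Fin K)) := by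
    intro i hi
    simp only [mem_insert, mem_filter, mem_univ, true_and] at hi ⊢
    rcases hi with rfl | ⟨hik, hji⟩
    · exact ⟨hjk, hkj⟩
    · refine ⟨hik.lt_of_ne fun h => ?_, hkj.trans hji⟩
      exact (hkj.trans hji).ne (congrArg v (Fin.ext h)).symm
  have := card_le_card hsub
  rw [card_insert_of_notMem (by simp)] at this
  have := hpre k
  omega

theorem psi_ne_of_lt
    (hpre : ∀ k : Fin K, #{j : Fin K | (j : ℕ) < k ∧ v k < v j} ≤ m - 1) (hv : Injective v)
    {k k' : Fin K} (hmk : m ≤ (k : ℕ)) (hkk' : k < k') :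
    psi m v k ≠ psi m v k' := by
  obtain ⟨j, hjk, hj, habove⟩ := psi_spec hv hmk k.isLt
  obtain ⟨j', -, hj', habove'⟩ := psi_spec hv (hmk.trans hkk'.le) k'.isLt
  intro heq
  obtain rfl : j = j' := hv (hj.symm.trans (heq.trans hj'))
  have hjk' : v j < v k' :=
    lt_of_le_card_filter hpre hv (lt_of_le_of_lt hjk hkk') habove'.ge
  have hsub : insert k' ({i : Fin K | (i : ℕ) ≤ k ∧ v j < v i} : Finset (Fin K)) ⊆
      ({i : Fin K | (i : ℕ) ≤ k' ∧ v j < v i} : Finset (Fin K)) := by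
    intro i hi
    simp only [mem_insert, mem_filter, mem_univ, true_and] at hi ⊢
    rcases hi with rfl | ⟨hik, hji⟩
    · exact ⟨le_rfl, hjk'⟩
    · exact ⟨hik.trans hkk'.le, hji⟩
  have := card_le_card hsub
  rw [card_insert_of_notMem fun h => hkk'.not_ge (mem_filter.mp h).2.1] at this
  omega

theorem sum_psi_eq_sum_WR
    (hpre : ∀ k : Fin K, #{j : Fin K | (j : ℕ) < k ∧ v k < v j} ≤ m - 1) (hv : Injective v) :
    ∑ k ∈ ({k | m ≤ (k : ℕ)} : Finset (Fin K)), psi m v k = ∑ j ∈ WR m v, v j := by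
  set S : Finset (Fin K) := {k | m ≤ (k : ℕ)}
  have hinj : Set.InjOn (fun k : Fin K => psi m v k) S := by
    intro k hk k' hk' heq
    rcases lt_trichotomy k k' with hlt | heq' | hgt
    · exact absurd heq (psi_ne_of_lt hpre hv (mem_filter.mp hk).2 hlt)
    · exact heq'
    · exact absurd heq.symm (psi_ne_of_lt hpre hv (mem_filter.mp hk').2 hgt)
  have himage : S.image (fun k : Fin K => psi m v k) = (WR m v).image v := by
    refine eq_of_subset_of_card_le (fun y hy => ?_) ?_
    · obtain ⟨k, hk, rfl⟩ := mem_image.mp hy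
      exact psi_mem_image_WR hv (mem_filter.mp hk).2 k.isLt
    · rw [card_image_of_injOn hinj, card_image_of_injective _ hv, Fin.card_filter_le_val]
      exact card_WR_le hv
  calc ∑ k ∈ S, psi m v k = ∑ y ∈ S.image (fun k : Fin K => psi m v k), y := by
        rw [sum_image hinj]
    _ = ∑ j ∈ WR m v, v j := by rw [himage, sum_image hv.injOn]

end Mudar

theorem mudar_nondeficit_general (m K : ℕ) (v : Fin K → ℝ)
    (hv : Function.Injective v)
    (hpre : ∀ k : Fin K,
      (Finset.univ.filter (fun j : Fin K => (j : ℕ) < (k : ℕ) ∧ v k < v j)).card ≤ m - 1)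
    (phat : Fin K → ℝ)
    (h1 : ∀ k : Fin K, (k : ℕ) < m → 0 ≤ phat k)
    (h2 : ∀ k : Fin K, m ≤ (k : ℕ) → psi m v (k : ℕ) ≤ phat k) :
    0 ≤ ∑ k ∈ (WR m v)ᶜ, phat k + ∑ k ∈ WR m v, (phat k - v k) := by
  set S : Finset (Fin K) := {k | m ≤ (k : ℕ)}
  have hrevenue : ∑ k ∈ (WR m v)ᶜ, phat k + ∑ k ∈ WR m v, (phat k - v k) =
      ∑ k ∈ Sᶜ, phat k + ∑ k ∈ S, (phat k - psi m v k) := by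
    rw [sum_sub_distrib, sum_sub_distrib, sum_psi_eq_sum_WR hpre hv, ← add_sub_assoc,
      ← add_sub_assoc, sum_compl_add_sum, sum_compl_add_sum]
  rw [hrevenue]
  refine add_nonneg (sum_nonneg fun k hk => h1 k ?_) (sum_nonneg fun k hk => ?_)
  · simpa [S] using hk
  · exact sub_nonneg.mpr (h2 k (mem_filter.mp hk).2)

/-- Abstract non-deficit inequality for MUDAR (Lemma 4, ND): with `v` injective, each new
value among the `m` largest of its prefix, and tentative payments `p̂` that are
non-negative for the first `m` winners and at least `ψ k` afterwards, the revenue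
`Σ_{k ∈ W_A} p̂ k + Σ_{k ∈ W_R} (p̂ k − v k)` is non-negative, where `W_A = W_Rᶜ`. -/
theorem mudar_nondeficit (m K : ℕ) (hm : 1 ≤ m) (v : Fin K → ℝ)
    (hv : Function.Injective v)
    (hpre : ∀ k : Fin K,
      (Finset.univ.filter (fun j : Fin K => (j : ℕ) < (k : ℕ) ∧ v k < v j)).card ≤ m - 1)
    (phat : Fin K → ℝ)
    (h1 : ∀ k : Fin K, (k : ℕ) < m → 0 ≤ phat k)
    (h2 : ∀ k : Fin K, m ≤ (k : ℕ) → psi m v (k : ℕ) ≤ phat k) :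
    0 ≤ ∑ k ∈ (WR m v)ᶜ, phat k + ∑ k ∈ WR m v, (phat k - v k) :=
  mudar_nondeficit_general m K v hv hpre phat h1 h2
end

section
/- Lemma (property transfer through the multi-to-single-demand reduction): let M̃ be any single-demand mechanism on B̃ = B × {1,…,m} and let M be the induced multi-demand mechanism. Then: (1) if M̃ is individually rational (IR), so is M; (2) if M̃ is non-deficit (ND), so is M; (3) if M̃ is non-wasteful (NW), so is M; (4) if M̃ is efficient at truthful reporting (its social welfare at every truthful single-demand profile equals the sum of the m largest true valuations among reachable buyers of B̃), then M is efficient at truthful reporting (its social welfare at every truthful multi-demand profile equals the sum of the m largest values among {v_{i,j} : 1 ≤ i ≤ n, 1 ≤ j ≤ m}). -/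
open scoped Classical

/-- A single-demand report: a reported valuation and a reported neighbour set. -/
abbrev Report (ι : Type) := ℝ × Finset ι

/-- Buyer `i` is reachable from the seller: some seller-neighbour `j` reaches `i`
through reported edges. -/
def Reachable {ι : Type} (rs : Finset ι) (θ : ι → Report ι) (i : ι) : Prop :=
  ∃ j ∈ rs, Relation.ReflTransGen (fun a b => b ∈ (θ a).2) j i

/-- Normalization of a global profile: unreachable buyers get the silent report `(0, ∅)`. -/
noncomputable def normalizeS {ι : Type} (rs : Finset ι) (θ : ι → Report ι) :
    ι → Report ι :=
  fun i => if Reachable rs θ i then θ i else (0, (∅ : Finset ι))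

/-- All reported valuations are non-negative. -/
def ValidS {ι : Type} (θ : ι → Report ι) : Prop := ∀ i, 0 ≤ (θ i).1

/-- The profile is normalized. -/
def NormalizedS {ι : Type} (rs : Finset ι) (θ : ι → Report ι) : Prop :=
  normalizeS rs θ = θ

/-- Allocation rule of a single-demand mechanism (as a 0/1 quantity in `ℕ`). -/
abbrev MechA (ι : Type) := Finset ι → (ι → Report ι) → ι → ℕ

/-- Payment rule of a single-demand mechanism. -/
abbrev MechP (ι : Type) := Finset ι → (ι → Report ι) → ι → ℝ

/-- The mechanism allocates 0/1 items per buyer and gives unreachable buyers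
zero allocation and zero payment (on valid normalized profiles). -/
def ProperS {ι : Type} (A : MechA ι) (P : MechP ι) : Prop :=
  ∀ rs θ, ValidS θ → NormalizedS rs θ → ∀ i,
    A rs θ i ≤ 1 ∧ (¬ Reachable rs θ i → A rs θ i = 0 ∧ P rs θ i = 0)

/-- Utility of buyer `i` with true valuations `v`. -/
noncomputable def utilS {ι : Type} (v : ι → ℝ) (A : MechA ι) (P : MechP ι)
    (rs : Finset ι) (θ : ι → Report ι) (i : ι) : ℝ :=
  v i * (A rs θ i : ℝ) - P rs θ i

/-- Social welfare with true valuations `v`. -/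
noncomputable def SWS {ι : Type} [Fintype ι] (v : ι → ℝ) (A : MechA ι)
    (rs : Finset ι) (θ : ι → Report ι) : ℝ :=
  ∑ i, v i * (A rs θ i : ℝ)

/-- Revenue of the seller. -/
noncomputable def RVS {ι : Type} [Fintype ι] (P : MechP ι)
    (rs : Finset ι) (θ : ι → Report ι) : ℝ :=
  ∑ i, P rs θ i

/-- Number of reachable buyers. -/
noncomputable def nReach {ι : Type} [Fintype ι] (rs : Finset ι) (θ : ι → Report ι) : ℕ :=
  (Finset.univ.filter (fun i => Reachable rs θ i)).card

/-- Incentive compatibility: truthful reporting is a dominant strategy. -/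
def ICS {ι : Type} [DecidableEq ι] (A : MechA ι) (P : MechP ι) : Prop :=
  ∀ (rs : Finset ι) (v : ι → ℝ) (r : ι → Finset ι), (∀ i, 0 ≤ v i) →
    ∀ θ : ι → Report ι, (∀ j, 0 ≤ (θ j).1 ∧ (θ j).2 ⊆ r j) →
    ∀ (i : ι) (v'' : ℝ) (r'' : Finset ι), 0 ≤ v'' → r'' ⊆ r i →
      utilS v A P rs (normalizeS rs (Function.update θ i (v i, r i))) i ≥
        utilS v A P rs (normalizeS rs (Function.update θ i (v'', r''))) i

/-- Individual rationality: a truthful buyer always gets non-negative utility. -/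
def IRS {ι : Type} [DecidableEq ι] (A : MechA ι) (P : MechP ι) : Prop :=
  ∀ (rs : Finset ι) (v : ι → ℝ) (r : ι → Finset ι), (∀ i, 0 ≤ v i) →
    ∀ θ : ι → Report ι, (∀ j, 0 ≤ (θ j).1 ∧ (θ j).2 ⊆ r j) →
    ∀ i : ι, 0 ≤ utilS v A P rs (normalizeS rs (Function.update θ i (v i, r i))) i

/-- Non-deficit: the revenue is non-negative on every valid normalized profile. -/
def NDS {ι : Type} [Fintype ι] (P : MechP ι) : Prop :=
  ∀ rs θ, ValidS θ → NormalizedS rs θ → 0 ≤ RVS P rs θ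

/-- Non-wastefulness for an `m`-unit auction. -/
def NWS {ι : Type} [Fintype ι] (m : ℕ) (A : MechA ι) : Prop :=
  ∀ rs θ, ValidS θ → NormalizedS rs θ → ∑ i, A rs θ i = min m (nReach rs θ)

/-- Sum of the `k` largest elements of a multiset of reals. -/
noncomputable def topSum (k : ℕ) (s : Multiset ℝ) : ℝ :=
  ((Multiset.sort s (· ≤ ·)).reverse.take k).sum

/-- The `r`-th largest element of a multiset of reals (1-based). -/
noncomputable def kthLargestM (s : Multiset ℝ) (r : ℕ) : ℝ :=
  (Multiset.sort s (· ≤ ·)).reverse.getD (r - 1) 0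

/-- A multi-demand report: a valuation vector and a neighbour set. -/
abbrev MReport (n m : ℕ) := (Fin m → ℝ) × Finset (Fin n)

/-- A valid valuation vector: non-negative and nonincreasing (diminishing valuations). -/
def ValidVec {m : ℕ} (w : Fin m → ℝ) : Prop := (∀ j, 0 ≤ w j) ∧ Antitone w

/-- Buyer `i` is reachable from the seller in the multi-demand profile graph. -/
def MReachable {n m : ℕ} (ts : Finset (Fin n)) (η : Fin n → MReport n m) (i : Fin n) :
    Prop :=
  ∃ j ∈ ts, Relation.ReflTransGen (fun a b => b ∈ (η a).2) j i

/-- Normalization: unreachable buyers get the silent report `((0,…,0), ∅)`. -/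
noncomputable def mnormalize {n m : ℕ} (ts : Finset (Fin n)) (η : Fin n → MReport n m) :
    Fin n → MReport n m :=
  fun i => if MReachable ts η i then η i else (fun _ => 0, (∅ : Finset (Fin n)))

/-- All reported valuation vectors are valid. -/
def MValid {n m : ℕ} (η : Fin n → MReport n m) : Prop := ∀ i, ValidVec (η i).1

/-- The multi-demand profile is normalized. -/
def MNormalized {n m : ℕ} (ts : Finset (Fin n)) (η : Fin n → MReport n m) : Prop :=
  mnormalize ts η = η

/-- Allocation rule of a multi-demand mechanism (0/1 per buyer and item index). -/
abbrev MMechA (n m : ℕ) := Finset (Fin n) → (Fin n → MReport n m) → Fin n → Fin m → ℕ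

/-- Payment rule of a multi-demand mechanism. -/
abbrev MMechP (n m : ℕ) := Finset (Fin n) → (Fin n → MReport n m) → Fin n → Fin m → ℝ

/-- The mechanism allocates 0/1 per entry and gives unreachable buyers zero allocation
and zero payments (on valid normalized profiles). -/
def MProper {n m : ℕ} (A : MMechA n m) (P : MMechP n m) : Prop :=
  ∀ ts η, MValid η → MNormalized ts η → ∀ i,
    (∀ j, A ts η i j ≤ 1) ∧
    (¬ MReachable ts η i → ∀ j, A ts η i j = 0 ∧ P ts η i j = 0)

/-- Utility of buyer `i` with true valuation vectors `v`. -/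
noncomputable def Mutil {n m : ℕ} (v : Fin n → Fin m → ℝ) (A : MMechA n m)
    (P : MMechP n m) (ts : Finset (Fin n)) (η : Fin n → MReport n m) (i : Fin n) : ℝ :=
  ∑ j, (v i j * (A ts η i j : ℝ) - P ts η i j)

/-- Social welfare with true valuation vectors `v`. -/
noncomputable def MSW {n m : ℕ} (v : Fin n → Fin m → ℝ) (A : MMechA n m)
    (ts : Finset (Fin n)) (η : Fin n → MReport n m) : ℝ :=
  ∑ i, ∑ j, v i j * (A ts η i j : ℝ)

/-- Revenue of the seller. -/
noncomputable def MRV {n m : ℕ} (P : MMechP n m) (ts : Finset (Fin n))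
    (η : Fin n → MReport n m) : ℝ :=
  ∑ i, ∑ j, P ts η i j

/-- Incentive compatibility for the multi-demand model. -/
def MIC {n m : ℕ} (A : MMechA n m) (P : MMechP n m) : Prop :=
  ∀ (ts : Finset (Fin n)) (v : Fin n → Fin m → ℝ) (t : Fin n → Finset (Fin n)),
    (∀ i, ValidVec (v i)) →
    ∀ η : Fin n → MReport n m, (∀ j, ValidVec (η j).1 ∧ (η j).2 ⊆ t j) →
    ∀ (i : Fin n) (v'' : Fin m → ℝ) (t'' : Finset (Fin n)),
      ValidVec v'' → t'' ⊆ t i →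
      Mutil v A P ts (mnormalize ts (Function.update η i (v i, t i))) i ≥
        Mutil v A P ts (mnormalize ts (Function.update η i (v'', t''))) i

/-- Individual rationality for the multi-demand model. -/
def MIR {n m : ℕ} (A : MMechA n m) (P : MMechP n m) : Prop :=
  ∀ (ts : Finset (Fin n)) (v : Fin n → Fin m → ℝ) (t : Fin n → Finset (Fin n)),
    (∀ i, ValidVec (v i)) →
    ∀ η : Fin n → MReport n m, (∀ j, ValidVec (η j).1 ∧ (η j).2 ⊆ t j) →
    ∀ i : Fin n, 0 ≤ Mutil v A P ts (mnormalize ts (Function.update η i (v i, t i))) i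

/-- Non-deficit for the multi-demand model. -/
def MND {n m : ℕ} (P : MMechP n m) : Prop :=
  ∀ ts η, MValid η → MNormalized ts η → 0 ≤ MRV P ts η

/-- Non-wastefulness for the multi-demand `m`-unit auction. -/
def MNW {n m : ℕ} (A : MMechA n m) : Prop :=
  ∀ ts η, MValid η → MNormalized ts η →
    ∑ i, ∑ j, A ts η i j =
      min m (m * (Finset.univ.filter (fun i => MReachable ts η i)).card)

/-- The seller's neighbour set in the constructed single-demand profile on
`B̃ = Fin n × Fin m`: the copies `(i, 0)` of the seller's multi-demand neighbours. -/
def liftSeller {n m : ℕ} (hm : 0 < m) (ts : Finset (Fin n)) : Finset (Fin n × Fin m) :=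
  ts.image (fun i => (i, ⟨0, hm⟩))

/-- The constructed single-demand profile on `B̃ = Fin n × Fin m` from a multi-demand
profile `η`: buyer `(i, j)` reports valuation `(η i).1 j`, and its neighbour set is
`{(i, j+1)}` if `j + 1 < m`, and `{(k, 0) : k ∈ (η i).2}` if `j` is the last index. -/
def liftProfile {n m : ℕ} (hm : 0 < m) (η : Fin n → MReport n m) :
    Fin n × Fin m → Report (Fin n × Fin m) :=
  fun b => ((η b.1).1 b.2,
    if h : (b.2 : ℕ) + 1 < m then {(b.1, ⟨(b.2 : ℕ) + 1, h⟩)}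
    else ((η b.1).2).image (fun k => (k, (⟨0, hm⟩ : Fin m))))

/-!
Buyer `i` of the multi-demand auction is simulated by the chain of single-demand buyers
`(i, 0) → (i, 1) → ⋯ → (i, m - 1)`, whose last link carries the edges of `i`. Hence a copy
`(i, j)` is reachable exactly when `i` is. Utility, revenue, number of allocated items and
welfare of the induced mechanism are therefore sums over the copies of the corresponding
single-demand quantities, and each property transfers by summing over `j`; when `i` reports
truthfully, so does each of its copies.
-/

theorem Finset.univ_val_map_uncurry {α β γ : Type*} [Fintype α] [Fintype β] (f : α → β → γ) :
    (Finset.univ : Finset (α × β)).val.map (fun b => f b.1 b.2) =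
      Finset.univ.val.bind fun a => Finset.univ.val.map (f a) := by
  rw [← Finset.univ_product_univ, Finset.product_val]
  simp only [SProd.sprod, Multiset.product, Multiset.map_bind, Multiset.map_map,
    Function.comp_def]

section Reachability

variable {ι : Type}

theorem exists_reflTransGen_congr_of_le {rs : Finset ι} {r s : ι → ι → Prop}
    (hsr : ∀ a b, s a b → r a b)
    (hrs : ∀ a b, (∃ j ∈ rs, Relation.ReflTransGen r j a) → r a b → s a b) (i : ι) :
    (∃ j ∈ rs, Relation.ReflTransGen s j i) ↔ (∃ j ∈ rs, Relation.ReflTransGen r j i) := by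
  constructor
  · rintro ⟨j, hj, h⟩
    exact ⟨j, hj, Relation.ReflTransGen.mono hsr _ _ h⟩
  · rintro ⟨j, hj, h⟩
    refine ⟨j, hj, ?_⟩
    induction h with
    | refl => exact .refl
    | tail hjb hbc ih => exact ih.tail (hrs _ _ ⟨j, hj, hjb⟩ hbc)

theorem reachable_normalizeS_iff (rs : Finset ι) (θ : ι → Report ι) (i : ι) :
    Reachable rs (normalizeS rs θ) i ↔ Reachable rs θ i :=
  exists_reflTransGen_congr_of_le
    (fun a b hb => by
      unfold normalizeS at hb
      split_ifs at hb
      · exact hb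
      · simp at hb)
    (fun a b ha hb => by rwa [normalizeS, if_pos (show Reachable rs θ a from ha)]) i

theorem normalizedS_normalizeS (rs : Finset ι) (θ : ι → Report ι) :
    NormalizedS rs (normalizeS rs θ) := by
  funext i
  by_cases h : Reachable rs θ i <;>
    simp [normalizeS, h, reachable_normalizeS_iff rs θ i]

theorem validS_normalizeS (rs : Finset ι) {θ : ι → Report ι} (h : ValidS θ) :
    ValidS (normalizeS rs θ) := by
  intro i
  unfold normalizeS
  split_ifs
  · exact h i
  · exact le_rfl

theorem mreachable_mnormalize_iff {n m : ℕ} (ts : Finset (Fin n)) (η : Fin n → MReport n m)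
    (i : Fin n) :
    MReachable ts (mnormalize ts η) i ↔ MReachable ts η i :=
  exists_reflTransGen_congr_of_le
    (fun a b hb => by
      unfold mnormalize at hb
      split_ifs at hb
      · exact hb
      · simp at hb)
    (fun a b ha hb => by rwa [mnormalize, if_pos (show MReachable ts η a from ha)]) i

end Reachability

section Lift

variable {n m : ℕ} (hm : 0 < m)

theorem validS_liftProfile {η : Fin n → MReport n m} (hη : MValid η) :
    ValidS (liftProfile hm η) :=
  fun b => (hη b.1).1 b.2

theorem liftProfile_snd_subset {η η' : Fin n → MReport n m} (h : ∀ a, (η a).2 ⊆ (η' a).2)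
    (b : Fin n × Fin m) : (liftProfile hm η b).2 ⊆ (liftProfile hm η' b).2 := by
  unfold liftProfile
  split_ifs
  · exact subset_rfl
  · exact Finset.image_subset_image (h b.1)

variable (η : Fin n → MReport n m)

theorem reflTransGen_liftProfile_copies (a : Fin n) (j : Fin m) :
    Relation.ReflTransGen (fun x y => y ∈ (liftProfile hm η x).2) (a, ⟨0, hm⟩) (a, j) := by
  obtain ⟨j, hj⟩ := j
  induction j with
  | zero => exact .refl
  | succ k ih =>
    refine (ih (Nat.lt_of_succ_lt hj)).tail ?_
    simp [liftProfile, hj]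

theorem reflTransGen_liftProfile_of_reflTransGen {k i : Fin n}
    (h : Relation.ReflTransGen (fun a b => b ∈ (η a).2) k i) :
    Relation.ReflTransGen (fun x y => y ∈ (liftProfile hm η x).2) (k, ⟨0, hm⟩) (i, ⟨0, hm⟩) := by
  induction h with
  | refl => exact .refl
  | @tail b c _ hbc ih =>
    have hlast : m - 1 < m := Nat.sub_lt hm one_pos
    refine (ih.trans (reflTransGen_liftProfile_copies hm η b ⟨m - 1, hlast⟩)).tail ?_
    simp only [liftProfile, show ¬ m - 1 + 1 < m by omega, dite_false]
    exact Finset.mem_image_of_mem _ hbc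

theorem reflTransGen_fst_of_reflTransGen_liftProfile {x y : Fin n × Fin m}
    (h : Relation.ReflTransGen (fun a b => b ∈ (liftProfile hm η a).2) x y) :
    Relation.ReflTransGen (fun a b => b ∈ (η a).2) x.1 y.1 := by
  induction h with
  | refl => exact .refl
  | @tail b c _ hbc ih =>
    simp only [liftProfile] at hbc
    split_ifs at hbc
    · rwa [Finset.mem_singleton.mp hbc]
    · obtain ⟨k, hk, rfl⟩ := Finset.mem_image.mp hbc
      exact ih.tail hk

theorem reachable_liftProfile_iff (ts : Finset (Fin n)) (b : Fin n × Fin m) :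
    Reachable (liftSeller hm ts) (liftProfile hm η) b ↔ MReachable ts η b.1 := by
  constructor
  · rintro ⟨_, hp, hpath⟩
    obtain ⟨k, hk, rfl⟩ := Finset.mem_image.mp hp
    exact ⟨k, hk, reflTransGen_fst_of_reflTransGen_liftProfile hm η hpath⟩
  · rintro ⟨k, hk, hpath⟩
    exact ⟨(k, ⟨0, hm⟩), Finset.mem_image_of_mem _ hk,
      (reflTransGen_liftProfile_of_reflTransGen hm η hpath).trans
        (reflTransGen_liftProfile_copies hm η b.1 b.2)⟩

theorem reachable_normalizeS_liftProfile_iff (ts : Finset (Fin n)) (b : Fin n × Fin m) :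
    Reachable (liftSeller hm ts) (normalizeS (liftSeller hm ts) (liftProfile hm η)) b ↔
      MReachable ts η b.1 :=
  (reachable_normalizeS_iff _ _ b).trans (reachable_liftProfile_iff hm η ts b)

/-- Normalizing before lifting is invisible after normalizing the lift: a copy `(i, j)` is
reachable exactly when `i` is, and then `i` keeps its report. -/
theorem normalizeS_liftProfile_mnormalize (ts : Finset (Fin n)) :
    normalizeS (liftSeller hm ts) (liftProfile hm (mnormalize ts η)) =
      normalizeS (liftSeller hm ts) (liftProfile hm η) := by
  funext b
  have hiff := (reachable_liftProfile_iff hm _ ts b).trans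
    ((mreachable_mnormalize_iff ts η b.1).trans (reachable_liftProfile_iff hm η ts b).symm)
  by_cases h : Reachable (liftSeller hm ts) (liftProfile hm η) b
  · have hb : MReachable ts η b.1 := (reachable_liftProfile_iff hm η ts b).mp h
    simp [normalizeS, h, hiff, liftProfile, mnormalize, hb]
  · simp [normalizeS, h, hiff]

theorem nReach_normalizeS_liftProfile (ts : Finset (Fin n)) :
    nReach (liftSeller hm ts) (normalizeS (liftSeller hm ts) (liftProfile hm η)) =
      (Finset.univ.filter (fun i => MReachable ts η i)).card * m := by
  have hfilter : Finset.univ.filter (fun b => Reachable (liftSeller hm ts)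
      (normalizeS (liftSeller hm ts) (liftProfile hm η)) b) =
      Finset.univ.filter (fun i => MReachable ts η i) ×ˢ (Finset.univ : Finset (Fin m)) := by
    ext b
    simp [reachable_normalizeS_liftProfile_iff]
  rw [nReach, hfilter, Finset.card_product, Finset.card_univ, Fintype.card_fin]

end Lift

def EfficientS {ι : Type} [Fintype ι] (m : ℕ) (A : MechA ι) : Prop :=
  ∀ (rs : Finset ι) (v : ι → ℝ) (r : ι → Finset ι), (∀ b, 0 ≤ v b) →
    SWS v A rs (normalizeS rs (fun b => (v b, r b))) =
      topSum m ((Finset.univ.filter (fun b => Reachable rs (fun c => (v c, r c)) b)).val.map v)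

def MEfficient {n m : ℕ} (A : MMechA n m) : Prop :=
  ∀ (ts : Finset (Fin n)) (v : Fin n → Fin m → ℝ) (t : Fin n → Finset (Fin n)),
    (∀ i, ValidVec (v i)) → (∀ i, MReachable ts (fun k => (v k, t k)) i) →
    MSW v A ts (fun k => (v k, t k)) =
      topSum m (Finset.univ.val.bind (fun i : Fin n => Finset.univ.val.map (v i)))

section Transfer

variable {n m : ℕ} (hm : 0 < m)

noncomputable def inducedA (A : MechA (Fin n × Fin m)) : MMechA n m := fun ts η a b =>
  A (liftSeller hm ts) (normalizeS (liftSeller hm ts) (liftProfile hm η)) (a, b)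

noncomputable def inducedP (P : MechP (Fin n × Fin m)) : MMechP n m := fun ts η a b =>
  P (liftSeller hm ts) (normalizeS (liftSeller hm ts) (liftProfile hm η)) (a, b)

theorem mir_induced {A : MechA (Fin n × Fin m)} {P : MechP (Fin n × Fin m)}
    (hIR : IRS A P) : MIR (inducedA hm A) (inducedP hm P) := by
  intro ts v t hv η hη i
  set η' := Function.update η i (v i, t i)
  have hη' : ∀ a, ValidVec (η' a).1 ∧ (η' a).2 ⊆ t a := by
    intro a
    rcases eq_or_ne a i with rfl | ha
    · simp [η', hv a]
    · simpa [η', ha] using hη a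
  set truth := liftProfile hm (fun k => (v k, t k))
  set rs := liftSeller hm ts
  have hcopy : ∀ j, liftProfile hm η' (i, j) = truth (i, j) := by
    intro j
    simp [liftProfile, η', truth]
  have hcopy_nonneg : ∀ j, 0 ≤ utilS (fun b => (truth b).1) A P rs
      (normalizeS rs (liftProfile hm η')) (i, j) := by
    intro j
    have h := hIR rs (fun b => (truth b).1) (fun b => (truth b).2) (fun b => (hv b.1).1 b.2)
      (liftProfile hm η')
      (fun b => ⟨(hη' b.1).1.1 b.2, liftProfile_snd_subset hm (fun a => (hη' a).2) b⟩) (i, j)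
    rwa [← hcopy j, Function.update_eq_self] at h
  simp only [Mutil, inducedA, inducedP, normalizeS_liftProfile_mnormalize]
  exact Finset.sum_nonneg fun j _ => hcopy_nonneg j

theorem mnd_induced {P : MechP (Fin n × Fin m)} (hND : NDS P) : MND (inducedP hm P) := by
  intro ts η hη _
  have h := hND (liftSeller hm ts) _ (validS_normalizeS _ (validS_liftProfile hm hη))
    (normalizedS_normalizeS _ _)
  rwa [RVS, Fintype.sum_prod_type] at h

theorem mnw_induced {A : MechA (Fin n × Fin m)} (hNW : NWS m A) : MNW (inducedA hm A) := by
  intro ts η hη _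
  have h := hNW (liftSeller hm ts) _ (validS_normalizeS _ (validS_liftProfile hm hη))
    (normalizedS_normalizeS _ _)
  rw [Fintype.sum_prod_type, nReach_normalizeS_liftProfile, Nat.mul_comm] at h
  exact h

theorem mEfficient_induced {A : MechA (Fin n × Fin m)} (hEff : EfficientS m A) :
    MEfficient (inducedA hm A) := by
  intro ts v t hv hreach
  set rs := liftSeller hm ts
  set truth := liftProfile hm (fun k => (v k, t k))
  have h : SWS (fun b => v b.1 b.2) A rs (normalizeS rs truth) =
      topSum m ((Finset.univ.filter (Reachable rs truth)).val.map fun b => v b.1 b.2) :=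
    hEff rs (fun b => v b.1 b.2) (fun b => (truth b).2) (fun b => (hv b.1).1 b.2)
  have hall : ∀ b, Reachable rs truth b :=
    fun b => (reachable_liftProfile_iff hm _ ts b).mpr (hreach b.1)
  rw [Finset.filter_true_of_mem fun b _ => hall b, Finset.univ_val_map_uncurry, SWS,
    Fintype.sum_prod_type] at h
  exact h

end Transfer

theorem reduction_property_transfer_general (n m : ℕ) (hm : 0 < m)
    (A : MechA (Fin n × Fin m)) (P : MechP (Fin n × Fin m)) :
    let Aind : MMechA n m := fun ts η a b =>
      A (liftSeller hm ts) (normalizeS (liftSeller hm ts) (liftProfile hm η)) (a, b)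
    let Pind : MMechP n m := fun ts η a b =>
      P (liftSeller hm ts) (normalizeS (liftSeller hm ts) (liftProfile hm η)) (a, b)
    -- (1) individual rationality transfers
    (IRS A P → MIR Aind Pind) ∧
    -- (2) non-deficit transfers
    (NDS P → MND Pind) ∧
    -- (3) non-wastefulness transfers
    (NWS m A → MNW Aind) ∧
    -- (4) efficiency at truthful reporting transfers
    ((∀ (rs : Finset (Fin n × Fin m)) (v : Fin n × Fin m → ℝ)
        (r : Fin n × Fin m → Finset (Fin n × Fin m)), (∀ b, 0 ≤ v b) →
        SWS v A rs (normalizeS rs (fun b => (v b, r b))) =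
          topSum m ((Finset.univ.filter
            (fun b => Reachable rs (fun c => (v c, r c)) b)).val.map v)) →
      (∀ (ts : Finset (Fin n)) (v : Fin n → Fin m → ℝ) (t : Fin n → Finset (Fin n)),
        (∀ i, ValidVec (v i)) →
        (∀ i, MReachable ts (fun k => (v k, t k)) i) →
        MSW v Aind ts (fun k => (v k, t k)) =
          topSum m (Finset.univ.val.bind
            (fun i : Fin n => Finset.univ.val.map (v i))))) :=
  ⟨mir_induced hm, mnd_induced hm, mnw_induced hm, mEfficient_induced hm⟩

/-- Property transfer through the multi-to-single-demand reduction: if the single-demand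
mechanism `(A, P)` on `B̃ = Fin n × Fin m` is (1) IR, (2) ND, (3) NW, or (4) efficient at
truthful reporting (its social welfare at every truthful single-demand profile equals the
sum of the `m` largest true valuations among reachable buyers of `B̃`), then the induced
multi-demand mechanism `(Aind, Pind)` is respectively IR, ND, NW, or efficient at
truthful reporting (its social welfare at every truthful multi-demand profile with all
buyers reachable equals the sum of the `m` largest values among all `n·m` true
valuations). -/
theorem reduction_property_transfer (n m : ℕ) (hm : 0 < m)
    (A : MechA (Fin n × Fin m)) (P : MechP (Fin n × Fin m))
    (hAP : ProperS A P) :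
    let Aind : MMechA n m := fun ts η a b =>
      A (liftSeller hm ts) (normalizeS (liftSeller hm ts) (liftProfile hm η)) (a, b)
    let Pind : MMechP n m := fun ts η a b =>
      P (liftSeller hm ts) (normalizeS (liftSeller hm ts) (liftProfile hm η)) (a, b)
    -- (1) individual rationality transfers
    (IRS A P → MIR Aind Pind) ∧
    -- (2) non-deficit transfers
    (NDS P → MND Pind) ∧
    -- (3) non-wastefulness transfers
    (NWS m A → MNW Aind) ∧
    -- (4) efficiency at truthful reporting transfers
    ((∀ (rs : Finset (Fin n × Fin m)) (v : Fin n × Fin m → ℝ)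
        (r : Fin n × Fin m → Finset (Fin n × Fin m)), (∀ b, 0 ≤ v b) →
        SWS v A rs (normalizeS rs (fun b => (v b, r b))) =
          topSum m ((Finset.univ.filter
            (fun b => Reachable rs (fun c => (v c, r c)) b)).val.map v)) →
      (∀ (ts : Finset (Fin n)) (v : Fin n → Fin m → ℝ) (t : Fin n → Finset (Fin n)),
        (∀ i, ValidVec (v i)) →
        (∀ i, MReachable ts (fun k => (v k, t k)) i) →
        MSW v Aind ts (fun k => (v k, t k)) =
          topSum m (Finset.univ.val.bind
            (fun i : Fin n => Finset.univ.val.map (v i))))) :=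
  reduction_property_transfer_general n m hm A P
end
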